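/- arXiv:2002.11112 — 2 statements merged into one kernel-verified Lean document; each statement's English description precedes it below -/
import Mathlib

section
/- Let φ : (0,∞) → (0,∞) be convex and strictly decreasing, and let L₁, K₁,...,Kₙ be star bodies in ℝⁿ. Then φ(1) ≥ φ( Ṽ(K₁,K₂,...,Kₙ) / Ṽ(K₁+̂_φL₁, K₂,...,Kₙ) ) + φ( Ṽ(L₁,K₂,...,Kₙ) / Ṽ(K₁+̂_φL₁, K₂,...,Kₙ) ). If φ is strictly convex, equality holds if and only if K₁ and L₁ are dilates. -/
/-!
With `w = ρQ · ρ₂ ⋯ ρₙ`, the ratio `Ṽ(M, K₂, …, Kₙ) / Ṽ(Q, K₂, …, Kₙ)` is the `w`-weighted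
average of `ρM / ρQ` over the sphere. Jensen's inequality bounds `φ` of the averages of `ρK / ρQ`
and `ρL / ρQ` by the averages of `φ (ρK / ρQ)` and `φ (ρL / ρQ)`, which add up to `φ 1` pointwise
by the definition of the Orlicz harmonic sum `Q`. For strictly convex `φ`, equality forces both
ratios to be constant, so `K₁` and `L₁` are dilates of `Q`; conversely, if `ρK = c ρL` then
`φ (c t) + φ t = φ 1` at `t = ρL / ρQ`, and the strict monotonicity of `t ↦ φ (c t) + φ t` makes
that ratio constant.

The spherical Hausdorff measure is finite because the sphere is the image of the faces of a cube
under the radial projection `x ↦ x / ‖x‖`, which is Lipschitz away from the origin, and it charges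
every open set because the orthogonal projection of a small cap around `p` onto `p^⊥` covers a ball.
-/

open MeasureTheory Metric Set Finset

/-- The surface (spherical) measure on the unit sphere `S^{n-1} ⊆ ℝⁿ`. -/
noncomputable def sphereσ (n : ℕ) : Measure (sphere (0 : EuclideanSpace ℝ (Fin n)) 1) :=
  μH[(n : ℝ) - 1]

open Module
open scoped ENNReal NNReal RealInnerProductSpace

theorem lipschitzOnWith_inv_norm_smul {F : Type*} [NormedAddCommGroup F] [NormedSpace ℝ F] :
    LipschitzOnWith 2 (fun x : F => ‖x‖⁻¹ • x) {x | 1 ≤ ‖x‖} := by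
  refine LipschitzOnWith.of_dist_le_mul fun x (hx : 1 ≤ ‖x‖) y (hy : 1 ≤ ‖y‖) => ?_
  have hx0 : 0 < ‖x‖ := one_pos.trans_le hx
  have hy0 : 0 < ‖y‖ := one_pos.trans_le hy
  have hsplit : ‖x‖⁻¹ • x - ‖y‖⁻¹ • y = ‖x‖⁻¹ • (x - y) + (‖x‖⁻¹ - ‖y‖⁻¹) • y := by
    rw [smul_sub, sub_smul]; abel
  have h₁ : ‖‖x‖⁻¹ • (x - y)‖ ≤ ‖x - y‖ := by
    rw [norm_smul, norm_inv, norm_norm]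
    exact mul_le_of_le_one_left (norm_nonneg _) (inv_le_one_of_one_le₀ hx)
  have h₂ : ‖(‖x‖⁻¹ - ‖y‖⁻¹) • y‖ ≤ ‖x - y‖ := by
    have : (‖x‖⁻¹ - ‖y‖⁻¹) * ‖y‖ = (‖y‖ - ‖x‖) / ‖x‖ := by field_simp
    rw [norm_smul, Real.norm_eq_abs, ← abs_of_pos hy0, ← abs_mul, abs_of_pos hy0, this, abs_div,
      abs_of_pos hx0]
    calc |‖y‖ - ‖x‖| / ‖x‖ ≤ |‖y‖ - ‖x‖| := div_le_self (abs_nonneg _) hx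
      _ ≤ ‖x - y‖ := by rw [abs_sub_comm]; exact abs_norm_sub_norm_le x y
  rw [dist_eq_norm, dist_eq_norm, hsplit, NNReal.coe_ofNat, two_mul]
  exact (norm_add_le _ _).trans (add_le_add h₁ h₂)

theorem hausdorffMeasure_lt_top_of_isBounded_of_sub_mem {E : Type*} [NormedAddCommGroup E]
    [NormedSpace ℝ E] [MeasurableSpace E] [BorelSpace E] (V : Submodule ℝ E)
    [FiniteDimensional ℝ V] {s : Set E} (hs : Bornology.IsBounded s) (a : E)
    (hsV : ∀ x ∈ s, x - a ∈ V) : μH[finrank ℝ V] s < ∞ := by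
  set t : Set V := {v | a + (v : E) ∈ s}
  have hst : s = (a + ·) '' (Subtype.val '' t) := by
    ext x
    refine ⟨fun hx => ⟨x - a, ⟨⟨x - a, hsV x hx⟩, ?_, rfl⟩, add_sub_cancel a x⟩, ?_⟩
    · show a + (x - a) ∈ s
      rwa [add_sub_cancel]
    · rintro ⟨_, ⟨v, hv, rfl⟩, rfl⟩
      exact hv
  have ht : Bornology.IsBounded t := by
    obtain ⟨C, hC⟩ := isBounded_iff_forall_norm_le.1 hs
    refine isBounded_iff_forall_norm_le.2 ⟨C + ‖a‖, fun v (hv : a + (v : E) ∈ s) => ?_⟩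
    calc ‖v‖ = ‖(a + (v : E)) - a‖ := by simp
      _ ≤ C + ‖a‖ := (norm_sub_le _ _).trans (add_le_add_left (hC _ hv) _)
  have hd : (0 : ℝ) ≤ finrank ℝ V := Nat.cast_nonneg _
  rw [hst, (Isometry.of_dist_eq fun x y => dist_add_left a x y).hausdorffMeasure_image (.inl hd),
    isometry_subtype_coe.hausdorffMeasure_image (.inl hd)]
  exact ht.measure_lt_top

theorem natCast_finrank_orthogonal_span_singleton {E : Type*} [NormedAddCommGroup E]
    [InnerProductSpace ℝ E] [FiniteDimensional ℝ E] {v : E} (hv : v ≠ 0) :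
    (finrank ℝ (ℝ ∙ v)ᗮ : ℝ) = finrank ℝ E - 1 := by
  rw [← (ℝ ∙ v).finrank_add_finrank_orthogonal, finrank_span_singleton hv]
  push_cast
  ring

theorem EuclideanSpace.exists_abs_apply_eq_one_of_norm_eq_one {ι : Type*} [Fintype ι]
    {u : EuclideanSpace ℝ ι} (hu : ‖u‖ = 1) :
    ∃ i, ∃ x : EuclideanSpace ℝ ι, |x i| = 1 ∧ ‖x‖ ≤ Fintype.card ι ∧ ‖x‖⁻¹ • x = u := by
  have : Nonempty ι := by
    by_contra h
    rw [not_nonempty_iff] at h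
    simp [Subsingleton.elim u 0] at hu
  -- some coordinate carries at least the average share `1 / card ι` of `‖u‖² = 1`
  have hsum : ∑ _i : ι, (1 / Fintype.card ι : ℝ) ≤ ∑ i, u i ^ 2 := by
    have := EuclideanSpace.norm_sq_eq u
    simp only [Real.norm_eq_abs, sq_abs, hu] at this
    rw [← this, sum_const, card_univ, nsmul_eq_mul]
    field_simp
    rfl
  obtain ⟨i, -, hi⟩ := exists_le_of_sum_le univ_nonempty hsum
  have hui : 0 < |u i| := by
    have : 0 < u i ^ 2 := (by positivity : (0 : ℝ) < 1 / Fintype.card ι).trans_le hi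
    exact abs_pos.2 fun h => by simp [h] at this
  have hui1 : |u i| ≤ 1 := by simpa [hu] using PiLp.norm_apply_le u i
  have hnorm : ‖|u i|⁻¹ • u‖ = |u i|⁻¹ := by
    rw [norm_smul, norm_inv, Real.norm_eq_abs, abs_abs, hu, mul_one]
  refine ⟨i, |u i|⁻¹ • u, by simp [abs_mul, hui.ne'], ?_, ?_⟩
  · rw [hnorm, inv_le_iff_one_le_mul₀ hui]
    have : u i ^ 2 ≤ |u i| := by rw [← sq_abs]; nlinarith
    calc 1 = Fintype.card ι * (1 / Fintype.card ι : ℝ) := by field_simp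
      _ ≤ Fintype.card ι * |u i| := by gcongr; exact hi.trans this
  · rw [hnorm, inv_inv, smul_smul, mul_inv_cancel₀ hui.ne', one_smul]

theorem hausdorffMeasure_sphere_lt_top {ι : Type*} [Fintype ι] [Nonempty ι] :
    μH[(Fintype.card ι : ℝ) - 1] (sphere (0 : EuclideanSpace ℝ ι) 1) < ∞ := by
  classical
  have hd : (0 : ℝ) ≤ Fintype.card ι - 1 := by
    have : (1 : ℝ) ≤ Fintype.card ι := by exact_mod_cast Fintype.card_pos
    linarith
  set face : ι → ℝ → Set (EuclideanSpace ℝ ι) :=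
    fun i s => {x | x i = s ∧ ‖x‖ ≤ Fintype.card ι}
  have hface : ∀ i s, μH[(Fintype.card ι : ℝ) - 1] (face i s) < ∞ := by
    intro i s
    have hv : EuclideanSpace.single i (1 : ℝ) ≠ 0 := by simp
    rw [← finrank_euclideanSpace (𝕜 := ℝ), ← natCast_finrank_orthogonal_span_singleton hv]
    refine hausdorffMeasure_lt_top_of_isBounded_of_sub_mem _
      ((isBounded_closedBall (x := 0)).subset fun x hx => mem_closedBall_zero_iff.2 hx.2)
      (EuclideanSpace.single i s) fun x hx => ?_
    rw [Submodule.mem_orthogonal_singleton_iff_inner_right, EuclideanSpace.inner_single_left]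
    simp [hx.1]
  set cube := ⋃ i, (face i 1 ∪ face i (-1))
  have hcover : sphere (0 : EuclideanSpace ℝ ι) 1 ⊆ (fun x => ‖x‖⁻¹ • x) '' cube := by
    intro u hu
    obtain ⟨i, x, hxi, hx, rfl⟩ :=
      EuclideanSpace.exists_abs_apply_eq_one_of_norm_eq_one (mem_sphere_zero_iff_norm.1 hu)
    refine ⟨x, mem_iUnion.2 ⟨i, ?_⟩, rfl⟩
    rcases (abs_eq zero_le_one).1 hxi with h | h
    exacts [.inl ⟨h, hx⟩, .inr ⟨h, hx⟩]
  have hcube : cube ⊆ {x | 1 ≤ ‖x‖} := by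
    simp only [cube, face, iUnion_subset_iff]
    intro i x hx
    have : |x i| = 1 := by rcases hx with ⟨h, -⟩ | ⟨h, -⟩ <;> simp [h]
    simpa [this] using PiLp.norm_apply_le x i
  calc μH[(Fintype.card ι : ℝ) - 1] (sphere (0 : EuclideanSpace ℝ ι) 1)
      ≤ μH[(Fintype.card ι : ℝ) - 1] ((fun x => ‖x‖⁻¹ • x) '' cube) := measure_mono hcover
    _ ≤ (2 : ℝ≥0) ^ ((Fintype.card ι : ℝ) - 1) * μH[(Fintype.card ι : ℝ) - 1] cube :=
      (lipschitzOnWith_inv_norm_smul.mono hcube).hausdorffMeasure_image_le hd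
    _ < ∞ := ENNReal.mul_lt_top (ENNReal.rpow_lt_top_of_nonneg hd ENNReal.coe_ne_top)
      ((measure_iUnion_fintype_le _ _).trans_lt <| ENNReal.sum_lt_top.2 fun i _ =>
        measure_union_lt_top (hface i 1) (hface i (-1)))

section SphereLift

variable {E : Type*} [NormedAddCommGroup E] [InnerProductSpace ℝ E] {p v : E}

theorem norm_add_sqrt_smul_eq_one (hp : ‖p‖ = 1) (hvp : ⟪v, p⟫ = 0) (hv : ‖v‖ ≤ 1) :
    ‖v + √(1 - ‖v‖ ^ 2) • p‖ = 1 := by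
  have hc : √(1 - ‖v‖ ^ 2) ^ 2 = 1 - ‖v‖ ^ 2 := Real.sq_sqrt (by nlinarith [norm_nonneg v])
  refine (sq_eq_sq₀ (norm_nonneg _) zero_le_one).1 ?_
  rw [norm_add_sq_real, real_inner_smul_right, hvp, norm_smul, Real.norm_of_nonneg
    (Real.sqrt_nonneg _), hp, mul_one, mul_zero, mul_zero, add_zero, hc]
  ring

theorem norm_add_sqrt_smul_sub_le (hp : ‖p‖ = 1) (hvp : ⟪v, p⟫ = 0) (hv : ‖v‖ ≤ 1) :
    ‖v + √(1 - ‖v‖ ^ 2) • p - p‖ ≤ 2 * ‖v‖ := by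
  set c := √(1 - ‖v‖ ^ 2)
  have hc : c ^ 2 = 1 - ‖v‖ ^ 2 := Real.sq_sqrt (by nlinarith [norm_nonneg v])
  have hsq : ‖v + c • p - p‖ ^ 2 = ‖v‖ ^ 2 + (c - 1) ^ 2 := by
    rw [show v + c • p - p = v + (c - 1) • p by module, norm_add_sq_real,
      real_inner_smul_right, hvp, norm_smul, Real.norm_eq_abs, hp, mul_one, sq_abs]
    ring
  refine (sq_le_sq₀ (norm_nonneg _) (by positivity)).1 ?_
  nlinarith [Real.sqrt_nonneg (1 - ‖v‖ ^ 2)]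

end SphereLift

theorem hausdorffMeasure_sphere_inter_ball_pos {E : Type*} [NormedAddCommGroup E]
    [InnerProductSpace ℝ E] [FiniteDimensional ℝ E] [MeasurableSpace E] [BorelSpace E] {p : E}
    (hp : ‖p‖ = 1) {ε : ℝ} (hε : 0 < ε) :
    0 < μH[(finrank ℝ E : ℝ) - 1] (sphere (0 : E) 1 ∩ ball p ε) := by
  set V := (ℝ ∙ p)ᗮ
  have hp0 : p ≠ 0 := by rintro rfl; simp at hp
  set δ := min (ε / 2) 1
  have hδ : 0 < δ := by positivity
  -- every small `v ⊥ p` is the projection of the point `v + √(1 - ‖v‖²) • p` of the sphere near `p`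
  have hball : ball (0 : V) δ ⊆ V.orthogonalProjectionOnto '' (sphere 0 1 ∩ ball p ε) := by
    intro v hv
    rw [mem_ball_zero_iff] at hv
    have hvp : ⟪(v : E), p⟫ = 0 := Submodule.mem_orthogonal_singleton_iff_inner_left.1 v.2
    have hv1 : ‖(v : E)‖ ≤ 1 := hv.le.trans (min_le_right _ _)
    refine ⟨v + √(1 - ‖(v : E)‖ ^ 2) • p, ⟨?_, ?_⟩, ?_⟩
    · exact mem_sphere_zero_iff_norm.2 (norm_add_sqrt_smul_eq_one hp hvp hv1)
    · rw [mem_ball, dist_eq_norm]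
      calc _ ≤ 2 * ‖(v : E)‖ := norm_add_sqrt_smul_sub_le hp hvp hv1
        _ < 2 * (ε / 2) := by gcongr; exact hv.trans_le (min_le_left _ _)
        _ = ε := by ring
    · have hpV : V.orthogonalProjectionOnto p = 0 :=
        Submodule.orthogonalProjectionOnto_apply_of_mem_orthogonal
          ((ℝ ∙ p).le_orthogonal_orthogonal (Submodule.mem_span_singleton_self p))
      rw [map_add, map_smul, hpV, smul_zero, add_zero,
        Submodule.orthogonalProjectionOnto_mem_subspace_eq_self]
  rw [← natCast_finrank_orthogonal_span_singleton hp0]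
  calc 0 < μH[(finrank ℝ V : ℝ)] (ball (0 : V) δ) :=
        isOpen_ball.measure_pos _ ⟨0, mem_ball_self hδ⟩
    _ ≤ μH[(finrank ℝ V : ℝ)] (V.orthogonalProjectionOnto '' (sphere 0 1 ∩ ball p ε)) :=
      measure_mono hball
    _ ≤ _ := hausdorffMeasure_orthogonalProjectionOnto_le V _ _ (Nat.cast_nonneg _)

theorem isFiniteMeasure_sphereσ {n : ℕ} (hn : 0 < n) : IsFiniteMeasure (sphereσ n) := by
  have : Nonempty (Fin n) := ⟨⟨0, hn⟩⟩
  have hd : (0 : ℝ) ≤ n - 1 := by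
    have : (1 : ℝ) ≤ n := by exact_mod_cast hn
    linarith
  refine ⟨?_⟩
  rw [sphereσ, ← isometry_subtype_coe.hausdorffMeasure_image (.inl hd), image_univ,
    Subtype.range_coe]
  simpa using hausdorffMeasure_sphere_lt_top (ι := Fin n)

theorem isOpenPosMeasure_sphereσ (n : ℕ) : (sphereσ n).IsOpenPosMeasure := by
  refine ⟨fun U hU ⟨p, hpU⟩ => ?_⟩
  obtain ⟨ε, hε, hball⟩ := Metric.isOpen_iff.1 hU p hpU
  have hp : ‖(p : EuclideanSpace ℝ (Fin n))‖ = 1 := mem_sphere_zero_iff_norm.1 p.2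
  have : Nontrivial (EuclideanSpace ℝ (Fin n)) :=
    nontrivial_of_ne _ 0 (ne_zero_of_mem_unit_sphere p)
  have hd : (0 : ℝ) ≤ n - 1 := by
    have := finrank_pos (R := ℝ) (M := EuclideanSpace ℝ (Fin n))
    rw [finrank_euclideanSpace_fin] at this
    have : (1 : ℝ) ≤ n := by exact_mod_cast this
    linarith
  have hsub : sphere 0 1 ∩ ball (p : EuclideanSpace ℝ (Fin n)) ε ⊆ Subtype.val '' ball p ε :=
    fun x ⟨hx, hxp⟩ => ⟨⟨x, hx⟩, hxp, rfl⟩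
  refine ((hausdorffMeasure_sphere_inter_ball_pos hp hε).trans_le ?_).ne'
  rw [finrank_euclideanSpace_fin]
  calc _ ≤ μH[(n : ℝ) - 1] (Subtype.val '' ball p ε) := measure_mono hsub
    _ = sphereσ n (ball p ε) := isometry_subtype_coe.hausdorffMeasure_image (.inl hd) _
    _ ≤ sphereσ n U := measure_mono hball

theorem isOpenPosMeasure_withDensity {α : Type*} [TopologicalSpace α] [MeasurableSpace α]
    {σ : Measure α} [σ.IsOpenPosMeasure] {w : α → ℝ≥0∞} (hw : Measurable w)
    (hw0 : ∀ x, w x ≠ 0) : (σ.withDensity w).IsOpenPosMeasure :=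
  ⟨fun U hU hne => by
    rw [Ne, withDensity_apply_eq_zero' hw.aemeasurable]
    simpa [hw0] using hU.measure_ne_zero σ hne⟩

theorem average_withDensity_ofReal {α : Type*} [MeasurableSpace α] {σ : Measure α}
    {w : α → ℝ} (hw : Measurable w) (hw0 : ∀ x, 0 ≤ w x) (hwi : Integrable w σ) (F : α → ℝ) :
    ⨍ x, F x ∂σ.withDensity (fun x => ENNReal.ofReal (w x)) =
      (∫ x, w x * F x ∂σ) / ∫ x, w x ∂σ := by
  have htotal : (σ.withDensity fun x => ENNReal.ofReal (w x)).real univ = ∫ x, w x ∂σ := by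
    rw [measureReal_def, withDensity_apply _ MeasurableSet.univ, Measure.restrict_univ,
      ← ofReal_integral_eq_lintegral_ofReal hwi (ae_of_all _ hw0),
      ENNReal.toReal_ofReal (integral_nonneg hw0)]
  rw [average_eq, htotal, integral_withDensity_eq_integral_toReal_smul hw.ennreal_ofReal
    (ae_of_all _ fun _ => ENNReal.ofReal_lt_top), smul_eq_mul, inv_mul_eq_div]
  simp_rw [ENNReal.toReal_ofReal (hw0 _), smul_eq_mul]

theorem average_add_average_of_add_eq {α : Type*} [MeasurableSpace α] {μ : Measure α}
    [IsFiniteMeasure μ] [NeZero μ] {F G : α → ℝ} (hF : Integrable F μ) (hG : Integrable G μ)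
    {c : ℝ} (hFG : ∀ x, F x + G x = c) : ⨍ x, F x ∂μ + ⨍ x, G x ∂μ = c := by
  rw [average_eq, average_eq, ← smul_add, ← integral_add hF hG, funext hFG, ← average_eq,
    average_const]

theorem StrictAntiOn.map_average_add_map_average_eq_of_eq_mul {α : Type*} [MeasurableSpace α]
    {μ : Measure α} [IsFiniteMeasure μ] [NeZero μ] {φ : ℝ → ℝ} (hφ : StrictAntiOn φ (Ioi 0))
    {f g : α → ℝ} {a c : ℝ} (ha : 0 < a) (hg : ∀ x, 0 < g x) (hfg : ∀ x, f x = a * g x)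
    (hsum : ∀ x, φ (f x) + φ (g x) = c) : φ (⨍ x, f x ∂μ) + φ (⨍ x, g x ∂μ) = c := by
  obtain ⟨x₀⟩ := μ.nonempty_of_neZero
  have hinj : InjOn (fun t => φ (a * t) + φ t) (Ioi 0) :=
    ((hφ.comp_strictMonoOn ((strictMono_mul_left_of_pos ha).strictMonoOn _)
      fun t ht => mul_pos ha ht).add hφ).injOn
  have hg_const : ∀ x, g x = g x₀ := fun x =>
    hinj (hg x) (hg x₀) (by simp only [← hfg, hsum])
  have hf_const : ∀ x, f x = f x₀ := fun x => by rw [hfg, hfg, hg_const]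
  rw [funext hf_const, funext hg_const, average_const, average_const, hsum]

theorem Continuous.exists_isClosed_convex_subset_of_forall_mem {α : Type*} [TopologicalSpace α]
    [CompactSpace α] {s : Set ℝ} {f : α → ℝ} (hs : Convex ℝ s)
    (hf : Continuous f) (hfs : ∀ x, f x ∈ s) :
    ∃ t, IsClosed t ∧ Convex ℝ t ∧ t ⊆ s ∧ ∀ x, f x ∈ t := by
  rcases isEmpty_or_nonempty α with _ | _
  · exact ⟨∅, isClosed_empty, convex_empty, empty_subset s, isEmptyElim⟩
  obtain ⟨x₀, -, h₀⟩ := isCompact_univ.exists_isMinOn univ_nonempty hf.continuousOn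
  obtain ⟨x₁, -, h₁⟩ := isCompact_univ.exists_isMaxOn univ_nonempty hf.continuousOn
  exact ⟨Icc (f x₀) (f x₁), isClosed_Icc, convex_Icc _ _, hs.ordConnected.out (hfs x₀) (hfs x₁),
    fun x => ⟨h₀ (mem_univ x), h₁ (mem_univ x)⟩⟩

section Jensen

variable {α : Type*} [TopologicalSpace α] [CompactSpace α] [MeasurableSpace α]
  [OpensMeasurableSpace α] {μ : Measure α} [IsFiniteMeasure μ] {s : Set ℝ} {φ : ℝ → ℝ}
  {f g : α → ℝ}

theorem Continuous.integrable_of_compactSpace (hf : Continuous f) : Integrable f μ :=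
  hf.integrable_of_hasCompactSupport (HasCompactSupport.of_compactSpace f)

theorem ConvexOn.map_average_le_of_continuous [NeZero μ] (hs : IsOpen s) (hφ : ConvexOn ℝ s φ)
    (hf : Continuous f) (hfs : ∀ x, f x ∈ s) : φ (⨍ x, f x ∂μ) ≤ ⨍ x, φ (f x) ∂μ := by
  obtain ⟨t, htc, htv, hts, hft⟩ := hf.exists_isClosed_convex_subset_of_forall_mem hφ.1 hfs
  have hφc := hφ.continuousOn hs
  exact (hφ.subset hts htv).map_average_le (hφc.mono hts) htc (ae_of_all _ hft)
    hf.integrable_of_compactSpace (hφc.comp_continuous hf hfs).integrable_of_compactSpace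

theorem StrictConvexOn.eq_average_of_map_average_eq [μ.IsOpenPosMeasure] (hs : IsOpen s)
    (hφ : StrictConvexOn ℝ s φ) (hf : Continuous f) (hfs : ∀ x, f x ∈ s)
    (heq : φ (⨍ x, f x ∂μ) = ⨍ x, φ (f x) ∂μ) : ∀ x, f x = ⨍ y, f y ∂μ := by
  obtain ⟨t, htc, htv, hts, hft⟩ := hf.exists_isClosed_convex_subset_of_forall_mem hφ.1 hfs
  have hφc := hφ.convexOn.continuousOn hs
  rcases (hφ.subset hts htv).ae_eq_const_or_map_average_lt (hφc.mono hts) htc (ae_of_all _ hft)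
    (hf.integrable_of_compactSpace (μ := μ))
    (hφc.comp_continuous hf hfs).integrable_of_compactSpace with h | h
  · exact congrFun ((hf.ae_eq_iff_eq μ continuous_const).1 h)
  · exact absurd heq h.ne

theorem ConvexOn.map_average_add_map_average_le [NeZero μ] (hs : IsOpen s) (hφ : ConvexOn ℝ s φ)
    (hf : Continuous f) (hg : Continuous g) (hfs : ∀ x, f x ∈ s) (hgs : ∀ x, g x ∈ s) {c : ℝ}
    (hsum : ∀ x, φ (f x) + φ (g x) = c) : φ (⨍ x, f x ∂μ) + φ (⨍ x, g x ∂μ) ≤ c := by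
  have hφc := hφ.continuousOn hs
  calc _ ≤ ⨍ x, φ (f x) ∂μ + ⨍ x, φ (g x) ∂μ := add_le_add
        (hφ.map_average_le_of_continuous hs hf hfs) (hφ.map_average_le_of_continuous hs hg hgs)
    _ = c := average_add_average_of_add_eq
        (hφc.comp_continuous hf hfs).integrable_of_compactSpace
        (hφc.comp_continuous hg hgs).integrable_of_compactSpace hsum

theorem StrictConvexOn.eq_average_of_map_average_add_map_average_eq [NeZero μ]
    [μ.IsOpenPosMeasure] (hs : IsOpen s) (hφ : StrictConvexOn ℝ s φ) (hf : Continuous f)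
    (hg : Continuous g) (hfs : ∀ x, f x ∈ s) (hgs : ∀ x, g x ∈ s) {c : ℝ}
    (hsum : ∀ x, φ (f x) + φ (g x) = c) (heq : φ (⨍ x, f x ∂μ) + φ (⨍ x, g x ∂μ) = c) :
    (∀ x, f x = ⨍ y, f y ∂μ) ∧ ∀ x, g x = ⨍ y, g y ∂μ := by
  have hφc := hφ.convexOn.continuousOn hs
  have hJf := hφ.convexOn.map_average_le_of_continuous (μ := μ) hs hf hfs
  have hJg := hφ.convexOn.map_average_le_of_continuous (μ := μ) hs hg hgs
  have hmean : ⨍ x, φ (f x) ∂μ + ⨍ x, φ (g x) ∂μ = c := average_add_average_of_add_eq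
    (hφc.comp_continuous hf hfs).integrable_of_compactSpace
    (hφc.comp_continuous hg hgs).integrable_of_compactSpace hsum
  exact ⟨hφ.eq_average_of_map_average_eq hs hf hfs (by linarith),
    hφ.eq_average_of_map_average_eq hs hg hgs (by linarith)⟩

end Jensen

theorem dual_orlicz_brunn_minkowski_integral {α : Type*} [TopologicalSpace α] [CompactSpace α]
    [Nonempty α] [MeasurableSpace α] [OpensMeasurableSpace α] (σ : Measure α) [IsFiniteMeasure σ]
    [σ.IsOpenPosMeasure] {φ : ℝ → ℝ} (hφconv : ConvexOn ℝ (Ioi 0) φ)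
    (hφanti : StrictAntiOn φ (Ioi 0)) {ρK ρL ρQ W : α → ℝ} (hKc : Continuous ρK)
    (hLc : Continuous ρL) (hQc : Continuous ρQ) (hWc : Continuous W) (hKpos : ∀ u, 0 < ρK u)
    (hLpos : ∀ u, 0 < ρL u) (hQpos : ∀ u, 0 < ρQ u) (hWpos : ∀ u, 0 < W u)
    (hsum : ∀ u, φ (ρK u / ρQ u) + φ (ρL u / ρQ u) = φ 1) :
    φ 1 ≥ φ ((∫ u, ρK u * W u ∂σ) / ∫ u, ρQ u * W u ∂σ) +
        φ ((∫ u, ρL u * W u ∂σ) / ∫ u, ρQ u * W u ∂σ) ∧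
      (StrictConvexOn ℝ (Ioi 0) φ →
        (φ 1 = φ ((∫ u, ρK u * W u ∂σ) / ∫ u, ρQ u * W u ∂σ) +
            φ ((∫ u, ρL u * W u ∂σ) / ∫ u, ρQ u * W u ∂σ) ↔
          ∃ c : ℝ, 0 < c ∧ ∀ u, ρK u = c * ρL u)) := by
  have hwc : Continuous fun u => ρQ u * W u := hQc.mul hWc
  have hwpos : ∀ u, 0 < ρQ u * W u := fun u => mul_pos (hQpos u) (hWpos u)
  set μ := σ.withDensity fun u => ENNReal.ofReal (ρQ u * W u)
  have : IsFiniteMeasure μ :=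
    isFiniteMeasure_withDensity_ofReal hwc.integrable_of_compactSpace.hasFiniteIntegral
  have : μ.IsOpenPosMeasure := isOpenPosMeasure_withDensity hwc.measurable.ennreal_ofReal
    fun u => (ENNReal.ofReal_pos.2 (hwpos u)).ne'
  have hratio : ∀ {ρM : α → ℝ},
      (∫ u, ρM u * W u ∂σ) / ∫ u, ρQ u * W u ∂σ = ⨍ u, ρM u / ρQ u ∂μ := by
    intro ρM
    rw [average_withDensity_ofReal hwc.measurable (fun u => (hwpos u).le)
      hwc.integrable_of_compactSpace]
    congr 2 with u
    field_simp [(hQpos u).ne']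
  have hdilate : ∀ c u, ρK u = c * ρL u ↔ ρK u / ρQ u = c * (ρL u / ρQ u) := fun c u => by
    rw [← mul_div_assoc, div_left_inj' (hQpos u).ne']
  have hKc' : Continuous fun u => ρK u / ρQ u := hKc.div hQc fun u => (hQpos u).ne'
  have hLc' : Continuous fun u => ρL u / ρQ u := hLc.div hQc fun u => (hQpos u).ne'
  have hKpos' : ∀ u, 0 < ρK u / ρQ u := fun u => div_pos (hKpos u) (hQpos u)
  have hLpos' : ∀ u, 0 < ρL u / ρQ u := fun u => div_pos (hLpos u) (hQpos u)
  rw [hratio, hratio]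
  refine ⟨hφconv.map_average_add_map_average_le isOpen_Ioi hKc' hLc' hKpos' hLpos' hsum,
    fun hstrict => ⟨fun heq => ?_, fun ⟨c, hc, hKL⟩ => ?_⟩⟩
  · obtain ⟨hK, hL⟩ := hstrict.eq_average_of_map_average_add_map_average_eq isOpen_Ioi hKc' hLc'
      hKpos' hLpos' hsum heq.symm
    obtain ⟨u₀⟩ := ‹Nonempty α›
    have hLavg : 0 < ⨍ u, ρL u / ρQ u ∂μ := hL u₀ ▸ hLpos' u₀
    refine ⟨(⨍ u, ρK u / ρQ u ∂μ) / ⨍ u, ρL u / ρQ u ∂μ, div_pos (hK u₀ ▸ hKpos' u₀) hLavg,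
      fun u => (hdilate _ u).2 ?_⟩
    rw [hK u, hL u, div_mul_cancel₀ _ hLavg.ne']
  · exact (hφanti.map_average_add_map_average_eq_of_eq_mul hc hLpos'
      (fun u => (hdilate c u).1 (hKL u)) hsum).symm

theorem dual_orlicz_brunn_minkowski_general
    (n : ℕ) (hn : 0 < n)
    (φ : ℝ → ℝ)
    (hφconv : ConvexOn ℝ (Ioi 0) φ)
    (hφanti : StrictAntiOn φ (Ioi 0))
    (ρK ρL ρQ : sphere (0 : EuclideanSpace ℝ (Fin n)) 1 → ℝ)
    (ρ : ℕ → (sphere (0 : EuclideanSpace ℝ (Fin n)) 1 → ℝ))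
    (hKc : Continuous ρK) (hLc : Continuous ρL) (hQc : Continuous ρQ)
    (hKpos : ∀ u, 0 < ρK u) (hLpos : ∀ u, 0 < ρL u) (hQpos : ∀ u, 0 < ρQ u)
    (hc : ∀ i, 2 ≤ i → i ≤ n → Continuous (ρ i))
    (hpos : ∀ i, 2 ≤ i → i ≤ n → ∀ u, 0 < ρ i u)
    (hsum : ∀ u, φ (ρK u / ρQ u) + φ (ρL u / ρQ u) = φ 1)
    (VtQ VtK VtL : ℝ)
    (hVtQ : VtQ = (1 / n) * ∫ u, ρQ u * ∏ j ∈ Finset.Icc 2 n, ρ j u ∂(sphereσ n))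
    (hVtK : VtK = (1 / n) * ∫ u, ρK u * ∏ j ∈ Finset.Icc 2 n, ρ j u ∂(sphereσ n))
    (hVtL : VtL = (1 / n) * ∫ u, ρL u * ∏ j ∈ Finset.Icc 2 n, ρ j u ∂(sphereσ n)) :
    φ 1 ≥ φ (VtK / VtQ) + φ (VtL / VtQ) ∧
      (StrictConvexOn ℝ (Ioi 0) φ →
        (φ 1 = φ (VtK / VtQ) + φ (VtL / VtQ) ↔
          ∃ c : ℝ, 0 < c ∧ ∀ u, ρK u = c * ρL u)) := by
  have := isFiniteMeasure_sphereσ hn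
  have := isOpenPosMeasure_sphereσ n
  have : Nonempty (sphere (0 : EuclideanSpace ℝ (Fin n)) 1) :=
    ⟨⟨EuclideanSpace.single ⟨0, hn⟩ 1, by simp⟩⟩
  have hn' : (1 / n : ℝ) ≠ 0 := by
    have : (0 : ℝ) < n := by exact_mod_cast hn
    positivity
  rw [hVtK, hVtL, hVtQ, mul_div_mul_left _ _ hn', mul_div_mul_left _ _ hn']
  exact dual_orlicz_brunn_minkowski_integral (sphereσ n) hφconv hφanti hKc hLc hQc
    (continuous_finsetProd _ fun j hj => hc j (mem_Icc.1 hj).1 (mem_Icc.1 hj).2)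
    hKpos hLpos hQpos (fun u => prod_pos fun j hj => hpos j (mem_Icc.1 hj).1 (mem_Icc.1 hj).2 u)
    hsum

/-- Dual Orlicz–Brunn–Minkowski inequality for the Orlicz harmonic sum `Q = K₁ +̂_φ L₁`:
`φ(1) ≥ φ(Ṽ(K₁,K₂,...,Kₙ)/Ṽ(Q,K₂,...,Kₙ)) + φ(Ṽ(L₁,K₂,...,Kₙ)/Ṽ(Q,K₂,...,Kₙ))`;
if `φ` is strictly convex, equality holds iff `K₁` and `L₁` are dilates.
The star bodies `K₂,...,Kₙ` have radial functions `ρ 2, ..., ρ n`. -/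
theorem dual_orlicz_brunn_minkowski
    (n : ℕ) (hn : 0 < n)
    (φ : ℝ → ℝ)
    (hφconv : ConvexOn ℝ (Ioi 0) φ)
    (hφanti : StrictAntiOn φ (Ioi 0))
    (hφpos : ∀ t ∈ Ioi (0 : ℝ), 0 < φ t)
    (ρK ρL ρQ : sphere (0 : EuclideanSpace ℝ (Fin n)) 1 → ℝ)
    (ρ : ℕ → (sphere (0 : EuclideanSpace ℝ (Fin n)) 1 → ℝ))
    (hKc : Continuous ρK) (hLc : Continuous ρL) (hQc : Continuous ρQ)
    (hKpos : ∀ u, 0 < ρK u) (hLpos : ∀ u, 0 < ρL u) (hQpos : ∀ u, 0 < ρQ u)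
    (hc : ∀ i, 2 ≤ i → i ≤ n → Continuous (ρ i))
    (hpos : ∀ i, 2 ≤ i → i ≤ n → ∀ u, 0 < ρ i u)
    (hsum : ∀ u, φ (ρK u / ρQ u) + φ (ρL u / ρQ u) = φ 1)
    (VtQ VtK VtL : ℝ)
    (hVtQ : VtQ = (1 / n) * ∫ u, ρQ u * ∏ j ∈ Finset.Icc 2 n, ρ j u ∂(sphereσ n))
    (hVtK : VtK = (1 / n) * ∫ u, ρK u * ∏ j ∈ Finset.Icc 2 n, ρ j u ∂(sphereσ n))
    (hVtL : VtL = (1 / n) * ∫ u, ρL u * ∏ j ∈ Finset.Icc 2 n, ρ j u ∂(sphereσ n)) :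
    φ 1 ≥ φ (VtK / VtQ) + φ (VtL / VtQ) ∧
      (StrictConvexOn ℝ (Ioi 0) φ →
        (φ 1 = φ (VtK / VtQ) + φ (VtL / VtQ) ↔
          ∃ c : ℝ, 0 < c ∧ ∀ u, ρK u = c * ρL u)) :=
  dual_orlicz_brunn_minkowski_general n hn φ hφconv hφanti ρK ρL ρQ ρ hKc hLc hQc hKpos hLpos hQpos
    hc hpos hsum VtQ VtK VtL hVtQ hVtK hVtL
end

section
/- Let M be a class of star bodies in ℝⁿ containing K₁ and L₁, let K₂,...,Kₙ be star bodies, and let φ : (0,∞) → (0,∞) be strictly convex and strictly decreasing. If Ṽ_φ(Q, K₁, K₂,...,Kₙ) = Ṽ_φ(Q, L₁, K₂,...,Kₙ) for all Q ∈ M, then K₁ = L₁ (their radial functions agree). -/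
open MeasureTheory Metric Set Finset

/-- The Orlicz multiple dual mixed volume of `(Q, M, K₂, ..., Kₙ)`, where
`K₂,...,Kₙ` have radial functions `ρ 2, ..., ρ n`. -/
noncomputable def VOrlicz (n : ℕ) (φ : ℝ → ℝ)
    (Q M : sphere (0 : EuclideanSpace ℝ (Fin n)) 1 → ℝ)
    (ρ : ℕ → (sphere (0 : EuclideanSpace ℝ (Fin n)) 1 → ℝ)) : ℝ :=
  (1 / n) * ∫ u, φ (M u / Q u) * (Q u * ∏ j ∈ Finset.Icc 2 n, ρ j u) ∂(sphereσ n)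

open scoped RealInnerProductSpace

/-!
Strict convexity of `φ`, applied at the points `b / a` and `a / b` with weights proportional to
`a` and `b`, gives `φ 1 * (a + b) ≤ φ (b / a) * a + φ (a / b) * b` for `a, b > 0`, with equality
only when `a = b`. Taking `Q = K₁` and `Q = L₁` in the hypothesis and adding the two identities,
the integral of the continuous, nonnegative defect of this inequality at `a = ρ_K u, b = ρ_L u`
(weighted by `ρ₂ ⋯ ρₙ`) vanishes, so the defect vanishes everywhere and `ρ_K = ρ_L`.

For this the Hausdorff measure `μH[n - 1]` on the sphere must be finite and charge every open set.
Both follow by writing the sphere near a unit vector `v` as the graph of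
`y ↦ y + √(1 - ‖y‖²) • v` over the hyperplane `v^⊥`: the graph map is Lipschitz on balls of
radius `< 1`, and the orthogonal projection onto `v^⊥`, which inverts it, is `1`-Lipschitz.
-/

section HemisphereChart

variable {E : Type*} [NormedAddCommGroup E] [InnerProductSpace ℝ E] {v : E}

noncomputable def hemisphereChart (v : E) (y : (ℝ ∙ v)ᗮ) : E :=
  (y : E) + √(1 - ‖y‖ ^ 2) • v

lemma hemisphereChart_zero (v : E) : hemisphereChart v 0 = v := by
  simp [hemisphereChart]

lemma continuous_hemisphereChart (v : E) : Continuous (hemisphereChart v) := by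
  unfold hemisphereChart; fun_prop

lemma norm_hemisphereChart (hv : ‖v‖ = 1) {y : (ℝ ∙ v)ᗮ} (hy : ‖y‖ ≤ 1) :
    ‖hemisphereChart v y‖ = 1 := by
  have horth : ⟪(y : E), √(1 - ‖y‖ ^ 2) • v⟫ = 0 := by
    rw [real_inner_smul_right, real_inner_comm,
      Submodule.mem_orthogonal_singleton_iff_inner_right.mp y.2, mul_zero]
  have hsq : ‖hemisphereChart v y‖ ^ 2 = 1 := by
    have hy' : 0 ≤ 1 - ‖y‖ ^ 2 := by nlinarith [norm_nonneg y]
    rw [hemisphereChart, sq, norm_add_sq_eq_norm_sq_add_norm_sq_of_inner_eq_zero _ _ horth,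
      norm_smul, hv, Real.norm_of_nonneg (Real.sqrt_nonneg _), mul_one,
      Real.mul_self_sqrt hy', Submodule.coe_norm]
    ring
  exact (sq_eq_sq₀ (norm_nonneg _) zero_le_one).mp (by rw [hsq, one_pow])

lemma orthogonalProjectionOnto_hemisphereChart (y : (ℝ ∙ v)ᗮ) :
    (ℝ ∙ v)ᗮ.orthogonalProjectionOnto (hemisphereChart v y) = y := by
  simp [hemisphereChart,
    Submodule.orthogonalProjectionOnto_orthogonalComplement_singleton_eq_zero]

lemma coe_orthogonalProjectionOnto_orthogonal_singleton (hv : ‖v‖ = 1) (x : E) :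
    ((ℝ ∙ v)ᗮ.orthogonalProjectionOnto x : E) = x - ⟪v, x⟫ • v := by
  rw [← Submodule.starProjection_apply, Submodule.starProjection_orthogonal_val,
    Submodule.starProjection_unit_singleton ℝ hv]

lemma norm_sq_orthogonalProjectionOnto_orthogonal_singleton (hv : ‖v‖ = 1) {x : E}
    (hx : ‖x‖ = 1) : ‖(ℝ ∙ v)ᗮ.orthogonalProjectionOnto x‖ ^ 2 = 1 - ⟪v, x⟫ ^ 2 := by
  rw [Submodule.coe_norm, coe_orthogonalProjectionOnto_orthogonal_singleton hv,
    @norm_sub_sq_real, hx, norm_smul, hv, real_inner_smul_right, real_inner_comm x v,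
    Real.norm_eq_abs, mul_one, sq_abs]
  ring

lemma hemisphereChart_orthogonalProjectionOnto (hv : ‖v‖ = 1) {x : E} (hx : ‖x‖ = 1)
    (hxv : 0 ≤ ⟪v, x⟫) :
    hemisphereChart v ((ℝ ∙ v)ᗮ.orthogonalProjectionOnto x) = x := by
  rw [hemisphereChart, norm_sq_orthogonalProjectionOnto_orthogonal_singleton hv hx,
    coe_orthogonalProjectionOnto_orthogonal_singleton hv, sub_sub_cancel,
    Real.sqrt_sq hxv, sub_add_cancel]

lemma exists_lipschitzOnWith_hemisphereChart [FiniteDimensional ℝ E] (v : E) {r : ℝ}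
    (hr : r < 1) :
    ∃ C, LipschitzOnWith C (hemisphereChart v) (closedBall 0 r) := by
  refine ContDiffOn.exists_lipschitzOnWith (n := 1) ?_ one_ne_zero (convex_closedBall _ _) ?_
  · intro y hy
    have hy' : 1 - ‖y‖ ^ 2 ≠ 0 := by
      rw [mem_closedBall_zero_iff] at hy
      nlinarith [norm_nonneg y]
    refine ContDiffAt.contDiffWithinAt ?_
    unfold hemisphereChart
    have hval : ContDiff ℝ 1 (fun y : (ℝ ∙ v)ᗮ => (y : E)) := (ℝ ∙ v)ᗮ.subtypeL.contDiff
    exact hval.contDiffAt.add (((Real.contDiffAt_sqrt hy').comp y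
      (contDiffAt_const.sub (contDiff_norm_sq ℝ).contDiffAt)).smul contDiffAt_const)
  · exact isCompact_closedBall _ _

end HemisphereChart

section SphereHausdorffMeasure

variable {E : Type*} [NormedAddCommGroup E] [InnerProductSpace ℝ E] [FiniteDimensional ℝ E]
  [MeasurableSpace E] [BorelSpace E] {m : ℕ}

lemma isAddHaarMeasure_hausdorffMeasure_orthogonal_singleton
    (hE : Module.finrank ℝ E = m + 1) {v : E} (hv : v ≠ 0) :
    (μH[m] : Measure (ℝ ∙ v)ᗮ).IsAddHaarMeasure := by
  have : Fact (Module.finrank ℝ E = m + 1) := ⟨hE⟩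
  rw [← Submodule.finrank_orthogonal_span_singleton (𝕜 := ℝ) (n := m) hv]
  infer_instance

lemma hausdorffMeasure_inter_sphere_pos (hE : Module.finrank ℝ E = m + 1) {U : Set E}
    (hU : IsOpen U) {v : E} (hv : ‖v‖ = 1) (hvU : v ∈ U) : 0 < μH[m] (U ∩ sphere 0 1) := by
  have := isAddHaarMeasure_hausdorffMeasure_orthogonal_singleton hE
    (norm_ne_zero_iff.mp (hv ▸ one_ne_zero))
  set S : Set (ℝ ∙ v)ᗮ := {y | ‖y‖ < 1} ∩ hemisphereChart v ⁻¹' U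
  have hS : IsOpen S := (isOpen_lt continuous_norm continuous_const).inter
    (hU.preimage (continuous_hemisphereChart v))
  have hS0 : (0 : (ℝ ∙ v)ᗮ) ∈ S := ⟨by simp, by simpa [hemisphereChart_zero] using hvU⟩
  have hSU : S ⊆ (ℝ ∙ v)ᗮ.orthogonalProjectionOnto '' (U ∩ sphere 0 1) := fun y hy =>
    ⟨hemisphereChart v y, ⟨hy.2, mem_sphere_zero_iff_norm.2 (norm_hemisphereChart hv hy.1.le)⟩,
      orthogonalProjectionOnto_hemisphereChart y⟩
  calc 0 < μH[m] S := hS.measure_pos _ ⟨0, hS0⟩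
    _ ≤ μH[m] ((ℝ ∙ v)ᗮ.orthogonalProjectionOnto '' (U ∩ sphere 0 1)) := measure_mono hSU
    _ ≤ μH[m] (U ∩ sphere 0 1) := by
      simpa using (Submodule.lipschitzWith_orthogonalProjectionOnto (ℝ ∙ v)ᗮ
        ).hausdorffMeasure_image_le m.cast_nonneg (U ∩ sphere 0 1)

lemma hausdorffMeasure_sphere_inter_cap_lt_top (hE : Module.finrank ℝ E = m + 1) {v : E}
    (hv : ‖v‖ = 1) : μH[m] (sphere 0 1 ∩ {x | 3 / 5 < ⟪v, x⟫}) < ⊤ := by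
  have := isAddHaarMeasure_hausdorffMeasure_orthogonal_singleton hE
    (norm_ne_zero_iff.mp (hv ▸ one_ne_zero))
  obtain ⟨C, hC⟩ := exists_lipschitzOnWith_hemisphereChart v (r := 4 / 5) (by norm_num)
  -- on this cap the projection of `x` onto `v^⊥` has squared norm `1 - ⟪v, x⟫ ^ 2 < (4 / 5) ^ 2`
  have hcap :
      sphere 0 1 ∩ {x | 3 / 5 < ⟪v, x⟫} ⊆ hemisphereChart v '' closedBall 0 (4 / 5) := by
    rintro x ⟨hx, hxv⟩
    rw [mem_sphere_zero_iff_norm] at hx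
    refine ⟨(ℝ ∙ v)ᗮ.orthogonalProjectionOnto x, ?_,
      hemisphereChart_orthogonalProjectionOnto hv hx (by linarith [hxv.out])⟩
    have := norm_sq_orthogonalProjectionOnto_orthogonal_singleton hv hx
    rw [mem_closedBall_zero_iff]
    nlinarith [hxv.out, norm_nonneg ((ℝ ∙ v)ᗮ.orthogonalProjectionOnto x)]
  calc μH[m] (sphere 0 1 ∩ {x | 3 / 5 < ⟪v, x⟫})
      ≤ μH[m] (hemisphereChart v '' closedBall 0 (4 / 5)) := measure_mono hcap
    _ ≤ C ^ (m : ℝ) * μH[m] (closedBall (0 : (ℝ ∙ v)ᗮ) (4 / 5)) :=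
      hC.hausdorffMeasure_image_le m.cast_nonneg
    _ < ⊤ := ENNReal.mul_lt_top (by simp) (isCompact_closedBall _ _).measure_lt_top

theorem isFiniteMeasure_hausdorffMeasure_sphere (hE : Module.finrank ℝ E = m + 1) :
    IsFiniteMeasure (μH[m] : Measure (sphere (0 : E) 1)) := by
  refine ⟨isCompact_univ.measure_lt_top_of_nhdsWithin fun x _ => ?_⟩
  have hx : ‖(x : E)‖ = 1 := mem_sphere_zero_iff_norm.mp x.2
  refine ⟨{y | 3 / 5 < ⟪(x : E), y⟫}, mem_nhdsWithin_of_mem_nhds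
    ((isOpen_lt continuous_const (continuous_const.inner continuous_subtype_val)).mem_nhds ?_), ?_⟩
  · change 3 / 5 < ⟪(x : E), x⟫
    rw [real_inner_self_eq_norm_sq, hx]
    norm_num
  · rw [← isometry_subtype_coe.hausdorffMeasure_image (Or.inl m.cast_nonneg)]
    refine (measure_mono ?_).trans_lt (hausdorffMeasure_sphere_inter_cap_lt_top hE hx)
    rintro _ ⟨y, hy, rfl⟩
    exact ⟨y.2, hy⟩

theorem isOpenPosMeasure_hausdorffMeasure_sphere (hE : Module.finrank ℝ E = m + 1) :
    (μH[m] : Measure (sphere (0 : E) 1)).IsOpenPosMeasure := by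
  refine ⟨fun U hU ⟨x, hx⟩ => ?_⟩
  obtain ⟨W, hW, rfl⟩ := isOpen_induced_iff.mp hU
  rw [← isometry_subtype_coe.hausdorffMeasure_image (Or.inl m.cast_nonneg),
    Subtype.image_preimage_coe, inter_comm]
  exact (hausdorffMeasure_inter_sphere_pos hE hW (mem_sphere_zero_iff_norm.mp x.2) hx).ne'

end SphereHausdorffMeasure

lemma StrictConvexOn.mul_add_lt_of_ne {φ : ℝ → ℝ} (hφ : StrictConvexOn ℝ (Ioi 0) φ)
    {a b : ℝ} (ha : 0 < a) (hb : 0 < b) (hab : a ≠ b) :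
    φ 1 * a + φ 1 * b < φ (b / a) * a + φ (a / b) * b := by
  have hne : b / a ≠ a / b := by
    rw [Ne, div_eq_div_iff ha.ne' hb.ne']
    intro h
    rcases mul_self_eq_mul_self_iff.mp h with h | h <;> [exact hab h.symm; linarith]
  have hsum : a / (a + b) + b / (a + b) = 1 := by field_simp
  have h := hφ.2 (div_pos hb ha) (div_pos ha hb) hne (by positivity) (by positivity) hsum
  have hbary : a / (a + b) * (b / a) + b / (a + b) * (a / b) = 1 := by
    field_simp
    ring
  simp only [smul_eq_mul, hbary] at h
  have hab' : 0 < a + b := by positivity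
  calc φ 1 * a + φ 1 * b = (a + b) * φ 1 := by ring
    _ < (a + b) * (a / (a + b) * φ (b / a) + b / (a + b) * φ (a / b)) := by gcongr
    _ = φ (b / a) * a + φ (a / b) * b := by field_simp

section OrliczIntegral

variable {X : Type*} {φ : ℝ → ℝ} {Q M w : X → ℝ}

noncomputable def orliczIntegrand (φ : ℝ → ℝ) (Q M w : X → ℝ) (x : X) : ℝ :=
  φ (M x / Q x) * (Q x * w x)

lemma orliczIntegrand_add_orliczIntegrand_lt (hφ : StrictConvexOn ℝ (Ioi 0) φ) {x : X}
    (hQ0 : 0 < Q x) (hM0 : 0 < M x) (hw0 : 0 < w x) (hQM : Q x ≠ M x) :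
    orliczIntegrand φ Q Q w x + orliczIntegrand φ M M w x <
      orliczIntegrand φ Q M w x + orliczIntegrand φ M Q w x := by
  simp only [orliczIntegrand, div_self hQ0.ne', div_self hM0.ne']
  linarith [mul_lt_mul_of_pos_right (hφ.mul_add_lt_of_ne hQ0 hM0 hQM) hw0]

variable [TopologicalSpace X]

lemma continuous_orliczIntegrand (hφ : ContinuousOn φ (Ioi 0)) (hQ : Continuous Q)
    (hM : Continuous M) (hw : Continuous w) (hQ0 : ∀ x, 0 < Q x) (hM0 : ∀ x, 0 < M x) :
    Continuous (orliczIntegrand φ Q M w) :=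
  (hφ.comp_continuous (hM.div hQ fun x => (hQ0 x).ne') fun x => div_pos (hM0 x) (hQ0 x)).mul
    (hQ.mul hw)

variable [MeasurableSpace X]

noncomputable def orliczIntegral (μ : Measure X) (φ : ℝ → ℝ) (Q M w : X → ℝ) : ℝ :=
  ∫ x, orliczIntegrand φ Q M w x ∂μ

variable [OpensMeasurableSpace X] [CompactSpace X] {μ : Measure X} [IsFiniteMeasure μ]

theorem eq_of_orliczIntegral_eq [μ.IsOpenPosMeasure] (hφ : StrictConvexOn ℝ (Ioi 0) φ)
    (hQ : Continuous Q) (hM : Continuous M) (hw : Continuous w)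
    (hQ0 : ∀ x, 0 < Q x) (hM0 : ∀ x, 0 < M x) (hw0 : ∀ x, 0 < w x)
    (hQM : orliczIntegral μ φ Q Q w = orliczIntegral μ φ Q M w)
    (hMQ : orliczIntegral μ φ M Q w = orliczIntegral μ φ M M w) : Q = M := by
  have hφc : ContinuousOn φ (Ioi 0) := hφ.convexOn.continuousOn isOpen_Ioi
  have hc : ∀ {f g : X → ℝ}, Continuous f → Continuous g → (∀ x, 0 < f x) → (∀ x, 0 < g x) →
      Continuous (orliczIntegrand φ f g w) := fun hf hg hf0 hg0 =>
    continuous_orliczIntegrand hφc hf hg hw hf0 hg0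
  have hint : ∀ {f : X → ℝ}, Continuous f → Integrable f μ := fun hf =>
    hf.integrable_of_hasCompactSupport (.of_compactSpace _)
  set D := orliczIntegrand φ Q M w + orliczIntegrand φ M Q w -
    (orliczIntegrand φ Q Q w + orliczIntegrand φ M M w)
  have hDc : Continuous D :=
    ((hc hQ hM hQ0 hM0).add (hc hM hQ hM0 hQ0)).sub ((hc hQ hQ hQ0 hQ0).add (hc hM hM hM0 hM0))
  have hD : ∫ x, D x ∂μ = 0 := by
    rw [integral_sub' ((hint (hc hQ hM hQ0 hM0)).add (hint (hc hM hQ hM0 hQ0)))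
        ((hint (hc hQ hQ hQ0 hQ0)).add (hint (hc hM hM hM0 hM0))),
      integral_add' (hint (hc hQ hM hQ0 hM0)) (hint (hc hM hQ hM0 hQ0)),
      integral_add' (hint (hc hQ hQ hQ0 hQ0)) (hint (hc hM hM hM0 hM0))]
    unfold orliczIntegral at hQM hMQ
    linarith
  have hD_pos : ∀ x, Q x ≠ M x → 0 < D x := fun x hx =>
    sub_pos.2 (orliczIntegrand_add_orliczIntegrand_lt hφ (hQ0 x) (hM0 x) (hw0 x) hx)
  have hD_nonneg : 0 ≤ D := fun x => by
    rcases eq_or_ne (Q x) (M x) with h | h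
    · simp [D, orliczIntegrand, h]
    · exact (hD_pos x h).le
  funext x
  by_contra hx
  exact (integral_pos_of_integrable_nonneg_nonzero hDc (hint hDc) hD_nonneg
    (hD_pos x hx).ne').ne' hD

end OrliczIntegral

lemma sphereσ_add_one (m : ℕ) : sphereσ (m + 1) = μH[m] := by
  rw [sphereσ]
  push_cast
  ring_nf

instance (m : ℕ) : IsFiniteMeasure (sphereσ (m + 1)) :=
  sphereσ_add_one m ▸ isFiniteMeasure_hausdorffMeasure_sphere finrank_euclideanSpace_fin

instance (m : ℕ) : (sphereσ (m + 1)).IsOpenPosMeasure :=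
  sphereσ_add_one m ▸ isOpenPosMeasure_hausdorffMeasure_sphere finrank_euclideanSpace_fin

theorem orlicz_multiple_dual_mixed_volume_unique_general
    (n : ℕ) (hn : 0 < n)
    (φ : ℝ → ℝ)
    (hφconv : StrictConvexOn ℝ (Ioi 0) φ)
    (M : Set (sphere (0 : EuclideanSpace ℝ (Fin n)) 1 → ℝ))
    (hM : ∀ Q ∈ M, Continuous Q ∧ ∀ u, 0 < Q u)
    (ρK ρL : sphere (0 : EuclideanSpace ℝ (Fin n)) 1 → ℝ)
    (hKM : ρK ∈ M) (hLM : ρL ∈ M)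
    (ρ : ℕ → (sphere (0 : EuclideanSpace ℝ (Fin n)) 1 → ℝ))
    (hc : ∀ i, 2 ≤ i → i ≤ n → Continuous (ρ i))
    (hpos : ∀ i, 2 ≤ i → i ≤ n → ∀ u, 0 < ρ i u)
    (heq : ∀ Q ∈ M, VOrlicz n φ Q ρK ρ = VOrlicz n φ Q ρL ρ) :
    ρK = ρL := by
  obtain ⟨m, rfl⟩ := Nat.exists_eq_add_one_of_ne_zero hn.ne'
  obtain ⟨hKc, hK0⟩ := hM ρK hKM
  obtain ⟨hLc, hL0⟩ := hM ρL hLM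
  refine eq_of_orliczIntegral_eq (μ := sphereσ (m + 1)) hφconv hKc hLc
    (continuous_finsetProd _ fun j hj => hc j (mem_Icc.1 hj).1 (mem_Icc.1 hj).2) hK0 hL0
    (fun u => prod_pos fun j hj => hpos j (mem_Icc.1 hj).1 (mem_Icc.1 hj).2 u) ?_ ?_
  · exact mul_left_cancel₀ (by positivity) (heq ρK hKM)
  · exact mul_left_cancel₀ (by positivity) (heq ρL hLM)

/-- Uniqueness theorem: if a class `M` of star bodies (given by radial functions)
contains `K₁` and `L₁` and `Ṽ_φ(Q,K₁,K₂,...,Kₙ) = Ṽ_φ(Q,L₁,K₂,...,Kₙ)` for all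
`Q ∈ M`, where `φ` is strictly convex and strictly decreasing, then `K₁ = L₁`. -/
theorem orlicz_multiple_dual_mixed_volume_unique
    (n : ℕ) (hn : 0 < n)
    (φ : ℝ → ℝ)
    (hφconv : StrictConvexOn ℝ (Ioi 0) φ)
    (hφanti : StrictAntiOn φ (Ioi 0))
    (hφpos : ∀ t ∈ Ioi (0 : ℝ), 0 < φ t)
    (M : Set (sphere (0 : EuclideanSpace ℝ (Fin n)) 1 → ℝ))
    (hM : ∀ Q ∈ M, Continuous Q ∧ ∀ u, 0 < Q u)
    (ρK ρL : sphere (0 : EuclideanSpace ℝ (Fin n)) 1 → ℝ)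
    (hKM : ρK ∈ M) (hLM : ρL ∈ M)
    (ρ : ℕ → (sphere (0 : EuclideanSpace ℝ (Fin n)) 1 → ℝ))
    (hc : ∀ i, 2 ≤ i → i ≤ n → Continuous (ρ i))
    (hpos : ∀ i, 2 ≤ i → i ≤ n → ∀ u, 0 < ρ i u)
    (heq : ∀ Q ∈ M, VOrlicz n φ Q ρK ρ = VOrlicz n φ Q ρL ρ) :
    ρK = ρL :=
  orlicz_multiple_dual_mixed_volume_unique_general n hn φ hφconv M hM ρK ρL hKM hLM ρ hc hpos heq
end
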